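/- arXiv:math/0308008 — 3 statements merged into one kernel-verified Lean document; each statement's English description precedes it below -/
import Mathlib

section
/- Base change for graph cohomology (the identity H*(Γ,F) = H*(Γ) ⊗ H*(F) used in Step Two of the proof of the main theorem): let A be a commutative ℝ-algebra, and define H(Γ,α;A) to be the set of maps f : V → S ⊗_ℝ A such that for every oriented edge e the difference f(i(e)) − f(t(e)) lies in the ideal of S ⊗_ℝ A generated by α_e ⊗ 1. Then the canonical ℝ-algebra map H(Γ,α) ⊗_ℝ A → (maps V → S ⊗_ℝ A), sending f ⊗ a to the map p ↦ f(p) ⊗ a, is injective and its image is exactly H(Γ,α;A); in particular H(Γ,α;A) ≅ H(Γ,α) ⊗_ℝ A as ℝ-algebras. -/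
open MvPolynomial TensorProduct

set_option synthInstance.maxHeartbeats 1000000
set_option maxHeartbeats 1000000


lemma basis_sum_repr {R M ι : Type*} [CommRing R] [AddCommGroup M] [Module R M]
    (b : Module.Basis ι R M) (x : M) (T : Finset ι) (hT : (b.repr x).support ⊆ T) :
    ∑ i ∈ T, b.repr x i • b i = x := by
  rw [← Finset.sum_subset hT (fun i _ hi => by
    rw [Finsupp.notMem_support_iff.1 hi, zero_smul])]
  conv_rhs => rw [← b.linearCombination_repr x]
  rw [Finsupp.linearCombination_apply, Finsupp.sum]

lemma tmul_one_mul_eq_smul {n : ℕ} {A : Type} [CommRing A] [Algebra ℝ A]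
    (α : MvPolynomial (Fin n) ℝ) (y : MvPolynomial (Fin n) ℝ ⊗[ℝ] A) :
    (α ⊗ₜ[ℝ] (1 : A)) * y = α • y := by
  induction y using TensorProduct.induction_on with
  | zero => simp
  | tmul x a => rw [Algebra.TensorProduct.tmul_mul_tmul, one_mul, smul_tmul', smul_eq_mul]
  | add x y hx hy => rw [mul_add, smul_add, hx, hy]

lemma mem_span_tmul_iff {n : ℕ} {ι A : Type} [CommRing A] [Algebra ℝ A]
    (b : Module.Basis ι ℝ A) (α : MvPolynomial (Fin n) ℝ)
    (x : MvPolynomial (Fin n) ℝ ⊗[ℝ] A) :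
    x ∈ Ideal.span {α ⊗ₜ[ℝ] (1 : A)} ↔
      ∀ i, α ∣ (b.baseChange (MvPolynomial (Fin n) ℝ)).repr x i := by
  rw [Ideal.mem_span_singleton]
  constructor
  · rintro ⟨y, rfl⟩ i
    rw [tmul_one_mul_eq_smul, map_smul, Finsupp.smul_apply, smul_eq_mul]
    exact ⟨(b.baseChange (MvPolynomial (Fin n) ℝ)).repr y i, rfl⟩
  · intro h
    set bb := b.baseChange (MvPolynomial (Fin n) ℝ) with hbb
    choose c hc using h
    refine ⟨∑ i ∈ (bb.repr x).support, c i • bb i, ?_⟩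
    rw [Finset.mul_sum]
    have h2 : ∀ i ∈ (bb.repr x).support,
        (α ⊗ₜ[ℝ] (1 : A)) * (c i • bb i) = bb.repr x i • bb i := by
      intro i _
      rw [tmul_one_mul_eq_smul, smul_smul, ← hc i]
    rw [Finset.sum_congr rfl h2, basis_sum_repr bb x _ (subset_refl _)]

/-- A graph with an axial function: finite sets of vertices and oriented edges,
initial/terminal maps, a fixed-point-free orientation-reversing involution, and
weights `w e ∈ ℤ^n` with `w e ≠ 0` and `w (rev e) = - w e`. -/
structure GKMGraph (n : ℕ) where
  V : Type
  E : Type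
  fintV : Fintype V
  fintE : Fintype E
  i : E → V
  t : E → V
  rev : E → E
  rev_rev : ∀ e, rev (rev e) = e
  rev_ne : ∀ e, rev e ≠ e
  i_rev : ∀ e, i (rev e) = t e
  t_rev : ∀ e, t (rev e) = i e
  w : E → Fin n → ℤ
  w_ne : ∀ e, w e ≠ 0
  w_rev : ∀ e, w (rev e) = - w e

attribute [instance] GKMGraph.fintV GKMGraph.fintE

/-- The weight `a ∈ ℤ^n` regarded as the linear form `a₁x₁ + ⋯ + aₙxₙ ∈ ℝ[x₁,…,xₙ]`. -/
noncomputable def wtPoly {n : ℕ} (a : Fin n → ℤ) : MvPolynomial (Fin n) ℝ :=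
  ∑ j, MvPolynomial.C (a j : ℝ) * MvPolynomial.X j

/-- The graph cohomology `H(Γ,α)` as a subalgebra of the algebra of maps `V → S`. -/
noncomputable def gkmCohomology {n : ℕ} (G : GKMGraph n) :
    Subalgebra ℝ (G.V → MvPolynomial (Fin n) ℝ) where
  carrier := {f | ∀ e : G.E,
    f (G.i e) - f (G.t e) ∈ Ideal.span {wtPoly (G.w e)}}
  add_mem' := by
    intro f g hf hg e
    have h : (f + g) (G.i e) - (f + g) (G.t e) =
        (f (G.i e) - f (G.t e)) + (g (G.i e) - g (G.t e)) := by
      simp only [Pi.add_apply]; ring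
    rw [h]
    exact Ideal.add_mem _ (hf e) (hg e)
  mul_mem' := by
    intro f g hf hg e
    have h : (f * g) (G.i e) - (f * g) (G.t e) =
        f (G.i e) * (g (G.i e) - g (G.t e)) + (f (G.i e) - f (G.t e)) * g (G.t e) := by
      simp only [Pi.mul_apply]; ring
    rw [h]
    exact Ideal.add_mem _ (Ideal.mul_mem_left _ _ (hg e)) (Ideal.mul_mem_right _ _ (hf e))
  algebraMap_mem' := by
    intro r e
    simp only [Set.mem_setOf_eq, Pi.algebraMap_apply, sub_self]
    exact Ideal.zero_mem _

/-- The canonical `ℝ`-algebra map `H(Γ,α) ⊗_ℝ A → (V → S ⊗_ℝ A)` sending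
`f ⊗ a` to the map `p ↦ f p ⊗ a`. -/
noncomputable def gkmBaseChange {n : ℕ} (G : GKMGraph n) (A : Type) [CommRing A]
    [Algebra ℝ A] :
    (gkmCohomology G) ⊗[ℝ] A →ₐ[ℝ] (G.V → MvPolynomial (Fin n) ℝ ⊗[ℝ] A) :=
  Algebra.TensorProduct.lift
    ((Pi.algHom ℝ _ fun p =>
        (Algebra.TensorProduct.includeLeft :
            MvPolynomial (Fin n) ℝ →ₐ[ℝ] MvPolynomial (Fin n) ℝ ⊗[ℝ] A).comp
          (Pi.evalAlgHom ℝ (fun _ => MvPolynomial (Fin n) ℝ) p)).comp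
      (gkmCohomology G).val)
    (Pi.algHom ℝ _ fun _ =>
      (Algebra.TensorProduct.includeRight :
        A →ₐ[ℝ] MvPolynomial (Fin n) ℝ ⊗[ℝ] A))
    (fun _ _ => Commute.all _ _)

/-- base change for graph cohomology.  For a commutative `ℝ`-algebra `A`,
the canonical map `H(Γ,α) ⊗_ℝ A → (V → S ⊗_ℝ A)`, `f ⊗ a ↦ (p ↦ f p ⊗ a)`, is
injective with image exactly `H(Γ,α;A)`, the set of maps `f : V → S ⊗ A` such that
`f(i e) - f(t e)` lies in the ideal generated by `α_e ⊗ 1` for every edge `e`;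
in particular `H(Γ,α;A) ≅ H(Γ,α) ⊗_ℝ A`. -/
theorem gkm_base_change {n : ℕ} (G : GKMGraph n) (A : Type) [CommRing A] [Algebra ℝ A] :
    Function.Injective (gkmBaseChange G A) ∧
    Set.range (gkmBaseChange G A) =
      {f : G.V → MvPolynomial (Fin n) ℝ ⊗[ℝ] A | ∀ e : G.E,
        f (G.i e) - f (G.t e) ∈
          Ideal.span {(wtPoly (G.w e)) ⊗ₜ[ℝ] (1 : A)}} := by
  classical
  set S := MvPolynomial (Fin n) ℝ with hS
  let ι := Module.Basis.ofVectorSpaceIndex ℝ A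
  let b : Module.Basis ι ℝ A := Module.Basis.ofVectorSpace ℝ A
  set bb := b.baseChange S with hbb
  have hmap : ∀ (f : gkmCohomology G) (a : A) (p : G.V),
      gkmBaseChange G A (f ⊗ₜ a) p = (f : G.V → S) p ⊗ₜ a := by
    intro f a p
    simp [gkmBaseChange, Algebra.TensorProduct.lift_tmul,
      Algebra.TensorProduct.tmul_mul_tmul]
  constructor
  · rw [injective_iff_map_eq_zero]
    intro x hx
    obtain ⟨c, rfl⟩ := TensorProduct.eq_repr_basis_right b x
    have hc : ∀ p : G.V,
        (c.mapRange (fun g : gkmCohomology G => (g : G.V → S) p) rfl) = 0 := by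
      intro p
      apply TensorProduct.sum_tmul_basis_right_eq_zero b
      rw [Finsupp.sum_mapRange_index (fun i => by rw [zero_tmul])]
      have h1 := congrFun hx p
      rw [map_finsuppSum] at h1
      simp only [Finsupp.sum, Finset.sum_apply, Pi.zero_apply] at h1
      rw [Finsupp.sum]
      exact (Finset.sum_congr rfl fun i _ => (hmap (c i) (b i) p).symm).trans h1
    have hc0 : c = 0 := by
      refine Finsupp.ext fun i => ?_
      refine Subtype.ext (funext fun p => ?_)
      have := DFunLike.congr_fun (hc p) i
      simpa [Finsupp.mapRange_apply] using this
    rw [hc0, Finsupp.sum_zero_index]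
  · ext f
    constructor
    · rintro ⟨x, rfl⟩ e
      induction x using TensorProduct.induction_on with
      | zero => simp
      | tmul g a =>
          rw [hmap, hmap, ← sub_tmul, Ideal.mem_span_singleton]
          obtain ⟨s, hs⟩ := Ideal.mem_span_singleton.1 (g.2 e)
          exact ⟨s ⊗ₜ a, by rw [hs, Algebra.TensorProduct.tmul_mul_tmul, one_mul]⟩
      | add x y hx hy =>
          rw [map_add]
          have h : (gkmBaseChange G A x + gkmBaseChange G A y) (G.i e) -
              (gkmBaseChange G A x + gkmBaseChange G A y) (G.t e) =
              (gkmBaseChange G A x (G.i e) - gkmBaseChange G A x (G.t e)) +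
              (gkmBaseChange G A y (G.i e) - gkmBaseChange G A y (G.t e)) := by
            simp only [Pi.add_apply]; ring
          rw [h]
          exact Ideal.add_mem _ hx hy
    · intro hf
      have hmem : ∀ i : ι, (fun p => bb.repr (f p) i) ∈ gkmCohomology G := by
        intro i e
        have h2 : bb.repr (f (G.i e)) i - bb.repr (f (G.t e)) i =
            bb.repr (f (G.i e) - f (G.t e)) i := by rw [map_sub, Finsupp.sub_apply]
        rw [h2, Ideal.mem_span_singleton]
        exact (mem_span_tmul_iff b _ _).1 (hf e) i
      let T : Finset ι := Finset.univ.biUnion (fun p : G.V => (bb.repr (f p)).support)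
      refine ⟨∑ i ∈ T, (⟨fun p => bb.repr (f p) i, hmem i⟩ : gkmCohomology G) ⊗ₜ b i, ?_⟩
      funext p
      rw [map_sum, Finset.sum_apply]
      have h3 : ∀ i ∈ T,
          gkmBaseChange G A
            ((⟨fun p => bb.repr (f p) i, hmem i⟩ : gkmCohomology G) ⊗ₜ b i) p =
          bb.repr (f p) i • bb i := by
        intro i _
        rw [hmap]
        show bb.repr (f p) i ⊗ₜ[ℝ] b i = bb.repr (f p) i • bb i
        simp only [hbb, Module.Basis.baseChange_apply, smul_tmul', smul_eq_mul, mul_one]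
      rw [Finset.sum_congr rfl h3]
      exact basis_sum_repr bb (f p) T
        (Finset.subset_biUnion_of_mem (fun p => (bb.repr (f p)).support) (Finset.mem_univ p))
end

section
/- Invariance of the combinatorial Betti numbers: suppose Γ is d-valent, α is 2-independent, and Γ carries a connection ∇ compatible with α. Then for any two generic vectors ξ, ξ' ∈ ℝ^n and every i ∈ ℕ, β_i(Γ;ξ) = β_i(Γ;ξ'); i.e., the Betti numbers β_i(Γ) = #{p ∈ V : σ_p(ξ) = i} do not depend on the choice of generic ξ. -/
open MvPolynomial TensorProduct

/-- The weight of an edge regarded as a vector in `ℚ^n`. -/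
def GKMGraph.wQ {n : ℕ} (G : GKMGraph n) (e : G.E) : Fin n → ℚ :=
  fun j => (G.w e j : ℚ)

/-- `Γ` is `d`-valent: every vertex has exactly `d` outgoing oriented edges. -/
def GKMGraph.Valent {n : ℕ} (G : GKMGraph n) (d : ℕ) : Prop :=
  ∀ p : G.V, {e : G.E | G.i e = p}.ncard = d

/-- The axial function is 2-independent: the weights of any two distinct edges
issuing from the same vertex are `ℚ`-linearly independent. -/
def GKMGraph.TwoIndep {n : ℕ} (G : GKMGraph n) : Prop :=
  ∀ e e' : G.E, G.i e = G.i e' → e ≠ e' →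
    LinearIndependent ℚ ![G.wQ e, G.wQ e']

/-- `nab` is a connection on `Γ`: for each oriented edge `e` it gives a bijection
`∇_e : E_{i(e)} → E_{t(e)}` with `∇_{ē} = (∇_e)⁻¹`.  (Values of `nab e` outside
`E_{i(e)}` are irrelevant.) -/
def GKMGraph.IsConnection {n : ℕ} (G : GKMGraph n) (nab : G.E → G.E → G.E) : Prop :=
  (∀ e : G.E, Set.BijOn (nab e) {e' | G.i e' = G.i e} {e'' | G.i e'' = G.t e}) ∧
  (∀ e e' : G.E, G.i e' = G.i e → nab (G.rev e) (nab e e') = e')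

/-- The connection `nab` is compatible with the axial function: for every edge `e`
and every `e' ∈ E_{i(e)}`, the difference `α_{∇_e e'} - α_{e'}` is an integer
multiple of `α_e`. -/
def GKMGraph.Compatible {n : ℕ} (G : GKMGraph n) (nab : G.E → G.E → G.E) : Prop :=
  ∀ e e' : G.E, G.i e' = G.i e → ∃ m : ℤ, G.w (nab e e') = G.w e' + m • G.w e

/-- The pairing `⟨α_e, ξ⟩` of the weight of an edge with a vector `ξ ∈ ℝ^n`. -/
noncomputable def GKMGraph.pairing {n : ℕ} (G : GKMGraph n) (e : G.E) (ξ : Fin n → ℝ) : ℝ :=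
  ∑ j, (G.w e j : ℝ) * ξ j

/-- `ξ ∈ ℝ^n` is generic if `⟨α_e, ξ⟩ ≠ 0` for every edge `e`. -/
def GKMGraph.Generic {n : ℕ} (G : GKMGraph n) (ξ : Fin n → ℝ) : Prop :=
  ∀ e : G.E, G.pairing e ξ ≠ 0

/-- `σ_p(ξ)`: the number of edges issuing from `p` with `⟨α_e, ξ⟩ < 0`. -/
noncomputable def GKMGraph.sigma {n : ℕ} (G : GKMGraph n) (p : G.V) (ξ : Fin n → ℝ) : ℕ :=
  {e : G.E | G.i e = p ∧ G.pairing e ξ < 0}.ncard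

/-- The combinatorial Betti number `β_k(Γ;ξ) = #{p ∈ V : σ_p(ξ) = k}`. -/
noncomputable def GKMGraph.betti {n : ℕ} (G : GKMGraph n) (ξ : Fin n → ℝ) (k : ℕ) : ℕ :=
  {p : G.V | G.sigma p ξ = k}.ncard

namespace GKMaux
variable {n : ℕ} (G : GKMGraph n)

lemma pairing_seg (e : G.E) (x y : Fin n → ℝ) (t : ℝ) :
    G.pairing e (x + t • (y - x)) = G.pairing e x + t * (G.pairing e y - G.pairing e x) := by
  simp only [GKMGraph.pairing, Pi.add_apply, Pi.smul_apply, Pi.sub_apply, smul_eq_mul,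
    Finset.mul_sum, ← Finset.sum_add_distrib, ← Finset.sum_sub_distrib]
  congr 1; ext j; ring

lemma pairing_rev (e : G.E) (x : Fin n → ℝ) :
    G.pairing (G.rev e) x = - G.pairing e x := by
  simp [GKMGraph.pairing, G.w_rev, ← Finset.sum_neg_distrib]

lemma pairing_of_w_eq {e e' e'' : G.E} {m : ℤ} (hw : G.w e'' = G.w e' + m • G.w e)
    (x : Fin n → ℝ) :
    G.pairing e'' x = G.pairing e' x + (m : ℝ) * G.pairing e x := by
  simp only [GKMGraph.pairing, hw, Pi.add_apply, Pi.smul_apply, smul_eq_mul,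
    Finset.mul_sum, ← Finset.sum_add_distrib]
  push_cast
  congr 1; ext j; ring

lemma pairing_single (e : G.E) (j : Fin n) :
    G.pairing e (Pi.single j 1) = (G.w e j : ℝ) := by
  rw [GKMGraph.pairing, Finset.sum_eq_single j]
  · simp
  · intro k _ hk; simp [Pi.single_apply, hk]
  · simp

lemma pairing_continuous (e : G.E) : Continuous fun x : Fin n → ℝ => G.pairing e x := by
  unfold GKMGraph.pairing
  exact continuous_finset_sum _ fun j _ => (continuous_const.mul (continuous_apply j))

lemma same_sign_of_mul_pos {a b : ℝ} (h : 0 < a * b) : a < 0 ↔ b < 0 := by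
  rcases mul_pos_iff.mp h with ⟨ha, hb⟩ | ⟨ha, hb⟩ <;> constructor <;> intro <;> linarith

lemma affine_sign {A B s u : ℝ} (hsu : s ≤ u) (h : ∀ t ∈ Set.Icc s u, A + t * B ≠ 0) :
    0 < (A + s * B) * (A + u * B) := by
  set f : ℝ → ℝ := fun t => A + t * B with hf
  have hc : ContinuousOn f (Set.Icc s u) :=
    (continuous_const.add (continuous_id.mul continuous_const)).continuousOn
  have hs0 : f s ≠ 0 := h s ⟨le_refl s, hsu⟩
  have hu0 : f u ≠ 0 := h u ⟨hsu, le_refl u⟩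
  rcases lt_or_gt_of_ne hs0 with h1 | h1 <;> rcases lt_or_gt_of_ne hu0 with h2 | h2
  · exact mul_pos_of_neg_of_neg h1 h2
  · exfalso
    obtain ⟨t, ht, ht0⟩ := intermediate_value_Icc hsu hc
      (show (0:ℝ) ∈ Set.Icc (f s) (f u) from ⟨le_of_lt h1, le_of_lt h2⟩)
    exact h t ht ht0
  · exfalso
    obtain ⟨t, ht, ht0⟩ := intermediate_value_Icc' hsu hc
      (show (0:ℝ) ∈ Set.Icc (f u) (f s) from ⟨le_of_lt h2, le_of_lt h1⟩)
    exact h t ht ht0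
  · exact mul_pos h1 h2

/-- The connection sends an edge to its reverse. -/
lemma nab_self (h2 : G.TwoIndep) (nab : G.E → G.E → G.E)
    (hconn : G.IsConnection nab) (hcomp : G.Compatible nab) (e : G.E) :
    nab e e = G.rev e := by
  obtain ⟨m, hm⟩ := hcomp e e rfl
  have hie : G.i (nab e e) = G.t e := (hconn.1 e).mapsTo (show G.i e = G.i e from rfl)
  by_contra hne
  have hli := h2 (nab e e) (G.rev e) (by rw [hie, G.i_rev]) hne
  have h1 : G.wQ (nab e e) = (1 + (m:ℚ)) • G.wQ e := by
    funext j
    have := congrFun hm j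
    simp only [Pi.add_apply, Pi.smul_apply, smul_eq_mul] at this
    simp only [GKMGraph.wQ, this, Pi.smul_apply, smul_eq_mul]
    push_cast; ring
  have h2' : G.wQ (G.rev e) = -G.wQ e := by
    funext j; simp [GKMGraph.wQ, G.w_rev]
  have := (LinearIndependent.pair_iff.mp hli 1 (1 + (m:ℚ)) (by
    rw [h1, h2']; module)).1
  norm_num at this

lemma betti_eq_of_same_sign (x y : Fin n → ℝ)
    (hsign : ∀ e, (G.pairing e x < 0 ↔ G.pairing e y < 0)) (k : ℕ) :
    G.betti x k = G.betti y k := by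
  have hσ : ∀ p, G.sigma p x = G.sigma p y := by
    intro p
    unfold GKMGraph.sigma
    congr 1
    ext e
    simp only [Set.mem_setOf_eq]
    rw [hsign e]
  unfold GKMGraph.betti
  congr 1
  ext p
  simp [hσ p]

end GKMaux
namespace GKMaux
open MeasureTheory
variable {n : ℕ} (G : GKMGraph n)

/-- The pairing as a linear map in the second variable. -/
noncomputable def pairingLM (e : G.E) : (Fin n → ℝ) →ₗ[ℝ] ℝ where
  toFun x := G.pairing e x
  map_add' x y := by
    simp only [GKMGraph.pairing, Pi.add_apply, mul_add, Finset.sum_add_distrib]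
  map_smul' t x := by
    simp only [GKMGraph.pairing, Pi.smul_apply, smul_eq_mul, RingHom.id_apply,
      Finset.mul_sum]
    congr 1; ext j; ring

lemma exists_good (ξ ξ' : Fin n → ℝ) (hξ : G.Generic ξ) (hξ' : G.Generic ξ') :
    ∃ ξ'' : Fin n → ℝ,
      (∀ e, 0 < G.pairing e ξ' * G.pairing e ξ'') ∧
      (∀ e f, LinearIndependent ℚ ![G.wQ e, G.wQ f] →
        G.pairing e ξ * G.pairing f ξ'' ≠ G.pairing f ξ * G.pairing e ξ'') := by
  classical
  -- the bad set
  set D : G.E → G.E → (Fin n → ℝ) →ₗ[ℝ] ℝ :=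
    fun e f => G.pairing e ξ • pairingLM G f - G.pairing f ξ • pairingLM G e with hD
  set bad : Set (Fin n → ℝ) :=
    ⋃ (e : G.E) (f : G.E) (_ : LinearIndependent ℚ ![G.wQ e, G.wQ f]),
      (LinearMap.ker (D e f) : Set (Fin n → ℝ)) with hbad
  have hker : ∀ e f, LinearIndependent ℚ ![G.wQ e, G.wQ f] →
      LinearMap.ker (D e f) ≠ ⊤ := by
    intro e f hli hker
    -- the functional vanishes identically
    have hz : ∀ v, G.pairing e ξ * G.pairing f v - G.pairing f ξ * G.pairing e v = 0 := by
      intro v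
      have : v ∈ LinearMap.ker (D e f) := by rw [hker]; trivial
      exact (by simpa [hD, LinearMap.mem_ker] using this :
        G.pairing e ξ * pairingLM G f v - G.pairing f ξ * pairingLM G e v = 0)
    have hAe : G.pairing e ξ ≠ 0 := hξ e
    have hprop : ∀ j, (G.w f j : ℝ) = (G.pairing f ξ / G.pairing e ξ) * (G.w e j : ℝ) := by
      intro j
      have := hz (Pi.single j 1)
      rw [pairing_single, pairing_single] at this
      field_simp
      linarith
    obtain ⟨j0, hj0⟩ : ∃ j0, G.w e j0 ≠ 0 := by
      by_contra hc
      push_neg at hc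
      exact G.w_ne e (funext hc)
    set r : ℝ := G.pairing f ξ / G.pairing e ξ with hr
    set q : ℚ := (G.w f j0 : ℚ) / (G.w e j0 : ℚ) with hq
    have hrq : (q : ℝ) = r := by
      have h1 := hprop j0
      rw [hq]
      push_cast
      rw [h1]
      field_simp
    have hfq : ∀ j, G.wQ f j = q * G.wQ e j := by
      intro j
      have h1 := hprop j
      rw [← hrq] at h1
      have : ((G.wQ f j : ℚ) : ℝ) = ((q * G.wQ e j : ℚ) : ℝ) := by
        push_cast
        simpa [GKMGraph.wQ] using h1
      exact_mod_cast this
    have := (LinearIndependent.pair_iff.mp hli q (-1) (by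
      funext j
      simp only [Pi.add_apply, Pi.smul_apply, smul_eq_mul, Pi.zero_apply,
        Pi.neg_apply]
      rw [hfq j]; ring)).2
    norm_num at this
  have hbad0 : volume bad = 0 := by
    rw [hbad]
    refine measure_iUnion_null fun e => measure_iUnion_null fun f => ?_
    by_cases hli : LinearIndependent ℚ ![G.wQ e, G.wQ f]
    · rw [Set.iUnion_eq_if, if_pos hli]
      exact Measure.addHaar_submodule volume _ (hker e f hli)
    · rw [Set.iUnion_eq_if, if_neg hli]
      simp
  -- the good open set
  set U : Set (Fin n → ℝ) := {v | ∀ e, 0 < G.pairing e ξ' * G.pairing e v} with hU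
  have hUopen : IsOpen U := by
    have : U = ⋂ e : G.E, (fun v => G.pairing e ξ' * G.pairing e v) ⁻¹' Set.Ioi 0 := by
      ext v; simp [hU, Set.mem_iInter]
    rw [this]
    exact isOpen_iInter_of_finite fun e =>
      (isOpen_Ioi).preimage (continuous_const.mul (pairing_continuous G e))
  have hUmem : ξ' ∈ U := fun e => mul_self_pos.mpr (hξ' e)
  have hUpos : 0 < volume U := hUopen.measure_pos volume ⟨ξ', hUmem⟩
  have : ¬ U ⊆ bad := by
    intro hsub
    have := measure_mono (μ := (volume : Measure (Fin n → ℝ))) hsub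
    rw [hbad0] at this
    exact absurd (le_antisymm this zero_le) (ne_of_gt hUpos)
  obtain ⟨v, hvU, hvb⟩ := Set.not_subset.mp this
  refine ⟨v, hvU, fun e f hli hEq => hvb ?_⟩
  rw [hbad]
  refine Set.mem_iUnion.mpr ⟨e, Set.mem_iUnion.mpr ⟨f, Set.mem_iUnion.mpr ⟨hli, ?_⟩⟩⟩
  show v ∈ (LinearMap.ker (D e f) : Set (Fin n → ℝ))
  simp only [SetLike.mem_coe, LinearMap.mem_ker, hD, LinearMap.sub_apply, LinearMap.smul_apply]
  show G.pairing e ξ • (pairingLM G f) v - G.pairing f ξ • (pairingLM G e) v = 0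
  show G.pairing e ξ * G.pairing f v - G.pairing f ξ * G.pairing e v = 0
  rw [hEq]; ring

end GKMaux
namespace GKMaux
variable {n : ℕ} (G : GKMGraph n)

lemma crossing (h2 : G.TwoIndep) (nab : G.E → G.E → G.E)
    (hconn : G.IsConnection nab) (hcomp : G.Compatible nab)
    (ξ0 ξ1 : Fin n → ℝ) (tm t0 tp : ℝ) (htm : tm < t0) (htp : t0 < tp)
    (H1 : ∀ e : G.E, ∀ t ∈ Set.Icc tm tp, t ≠ t0 → G.pairing e (ξ0 + t • (ξ1 - ξ0)) ≠ 0)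
    (H2 : ∀ e f : G.E, G.pairing e (ξ0 + t0 • (ξ1 - ξ0)) = 0 →
        G.pairing f (ξ0 + t0 • (ξ1 - ξ0)) = 0 → ¬ LinearIndependent ℚ ![G.wQ e, G.wQ f])
    (k : ℕ) :
    G.betti (ξ0 + tm • (ξ1 - ξ0)) k = G.betti (ξ0 + tp • (ξ1 - ξ0)) k := by
  classical
  set P : G.E → ℝ → ℝ := fun e t => G.pairing e (ξ0 + t • (ξ1 - ξ0)) with hPdef
  have hP : ∀ (e : G.E) (t : ℝ),
      P e t = G.pairing e ξ0 + t * (G.pairing e ξ1 - G.pairing e ξ0) :=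
    fun e t => pairing_seg G e ξ0 ξ1 t
  have H1' : ∀ e : G.E, ∀ t ∈ Set.Icc tm tp, t ≠ t0 → P e t ≠ 0 := H1
  have H2' : ∀ e f : G.E, P e t0 = 0 → P f t0 = 0 →
      ¬ LinearIndependent ℚ ![G.wQ e, G.wQ f] := H2
  have keyIcc : ∀ (e : G.E) (s u : ℝ), s ≤ u →
      (∀ t ∈ Set.Icc s u, P e t ≠ 0) → (P e s < 0 ↔ P e u < 0) := by
    intro e s u hsu hne
    have := affine_sign (A := G.pairing e ξ0) (B := G.pairing e ξ1 - G.pairing e ξ0) hsu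
      (fun t ht => by rw [← hP]; exact hne t ht)
    rw [← hP e s, ← hP e u] at this
    exact same_sign_of_mul_pos this
  have S1 : ∀ e : G.E, P e t0 ≠ 0 → (P e tm < 0 ↔ P e t0 < 0) := by
    intro e h0
    refine keyIcc e tm t0 (le_of_lt htm) fun t ht => ?_
    rcases eq_or_ne t t0 with rfl | hne
    · exact h0
    · exact H1' e t ⟨ht.1, le_trans ht.2 (le_of_lt htp)⟩ hne
  have S2 : ∀ e : G.E, P e t0 ≠ 0 → (P e t0 < 0 ↔ P e tp < 0) := by
    intro e h0
    refine keyIcc e t0 tp (le_of_lt htp) fun t ht => ?_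
    rcases eq_or_ne t t0 with rfl | hne
    · exact h0
    · exact H1' e t ⟨le_trans (le_of_lt htm) ht.1, ht.2⟩ hne
  have S3 : ∀ e : G.E, P e t0 = 0 → (P e tm < 0 ↔ 0 < P e tp) := by
    intro e h0
    have h0' : G.pairing e ξ0 + t0 * (G.pairing e ξ1 - G.pairing e ξ0) = 0 := by
      rw [← hP]; exact h0
    have hB : G.pairing e ξ1 - G.pairing e ξ0 ≠ 0 := by
      intro hB0
      refine H1' e tm ⟨le_refl tm, le_of_lt (lt_trans htm htp)⟩ (ne_of_lt htm) ?_
      rw [hP, hB0]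
      rw [hB0] at h0'
      linarith
    rw [hP e tm, hP e tp]
    rcases lt_or_gt_of_ne hB with h | h <;> constructor <;> intro h' <;> nlinarith
  have hu : ∀ e f : G.E, P e t0 = 0 → P f t0 = 0 → G.i e = G.i f → e = f := by
    intro e f he hf hif
    by_contra hne
    exact H2' e f he hf (h2 e f hif hne)
  have transfer : ∀ e : G.E, P e t0 = 0 → ∀ e' : G.E, G.i e' = G.i e →
      (P e' tm < 0 ↔ P (nab e e') tp < 0) := by
    intro e he0 e' hie'
    rcases eq_or_ne e' e with rfl | hne
    · rw [nab_self G h2 nab hconn hcomp e']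
      have hrev : P (G.rev e') tp = - P e' tp := pairing_rev G e' _
      rw [hrev]
      constructor
      · intro h; have := (S3 e' he0).mp h; linarith
      · intro h; exact (S3 e' he0).mpr (by linarith)
    · have he'0 : P e' t0 ≠ 0 := fun h => hne (hu e' e h he0 hie')
      obtain ⟨m, hm⟩ := hcomp e e' hie'
      have hPn : ∀ t : ℝ, P (nab e e') t = P e' t + (m : ℝ) * P e t :=
        fun t => pairing_of_w_eq G hm _
      have hn0 : P (nab e e') t0 ≠ 0 := by
        rw [hPn t0, he0, mul_zero, add_zero]; exact he'0
      calc P e' tm < 0 ↔ P e' t0 < 0 := S1 e' he'0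
        _ ↔ P (nab e e') t0 < 0 := by rw [hPn t0, he0, mul_zero, add_zero]
        _ ↔ P (nab e e') tp < 0 := S2 _ hn0
  have sigmaF : ∀ e : G.E, P e t0 = 0 →
      G.sigma (G.i e) (ξ0 + tm • (ξ1 - ξ0)) = G.sigma (G.t e) (ξ0 + tp • (ξ1 - ξ0)) := by
    intro e he0
    have hbij := hconn.1 e
    unfold GKMGraph.sigma
    have himg : nab e '' {e' | G.i e' = G.i e ∧ G.pairing e' (ξ0 + tm • (ξ1 - ξ0)) < 0}
        = {e'' | G.i e'' = G.t e ∧ G.pairing e'' (ξ0 + tp • (ξ1 - ξ0)) < 0} := by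
      ext e''
      constructor
      · rintro ⟨e', ⟨hi', hs'⟩, rfl⟩
        exact ⟨hbij.mapsTo hi', (transfer e he0 e' hi').mp hs'⟩
      · rintro ⟨hi'', hs''⟩
        obtain ⟨e', hi', heq⟩ := hbij.surjOn hi''
        refine ⟨e', ⟨hi', (transfer e he0 e' hi').mpr ?_⟩, heq⟩
        show P (nab e e') tp < 0
        rw [show nab e e' = e'' from heq]
        exact hs''
    rw [← himg]
    exact (Set.ncard_image_of_injOn (hbij.injOn.mono fun x hx => hx.1)).symm
  -- the vertex involution
  set φ : G.V → G.V :=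
    fun p => if h : ∃ e, G.i e = p ∧ P e t0 = 0 then G.t h.choose else p with hφ
  have hσφ : ∀ p : G.V,
      G.sigma p (ξ0 + tm • (ξ1 - ξ0)) = G.sigma (φ p) (ξ0 + tp • (ξ1 - ξ0)) := by
    intro p
    by_cases h : ∃ e, G.i e = p ∧ P e t0 = 0
    · obtain ⟨hi, h0⟩ := h.choose_spec
      have hp : φ p = G.t h.choose := dif_pos h
      have hs := sigmaF h.choose h0
      rw [hi] at hs
      rw [hp]
      exact hs
    · have hp : φ p = p := dif_neg h
      rw [hp]
      unfold GKMGraph.sigma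
      congr 1
      ext e'
      simp only [Set.mem_setOf_eq]
      refine and_congr_right fun hi' => ?_
      have h0 : P e' t0 ≠ 0 := fun hz => h ⟨e', hi', hz⟩
      exact (S1 e' h0).trans (S2 e' h0)
  have hinv : Function.Involutive φ := by
    intro p
    by_cases h : ∃ e, G.i e = p ∧ P e t0 = 0
    · obtain ⟨hi, h0⟩ := h.choose_spec
      have h1 : φ p = G.t h.choose := dif_pos h
      have hrev0 : P (G.rev h.choose) t0 = 0 := by
        show G.pairing (G.rev h.choose) _ = 0
        rw [pairing_rev]
        show -P h.choose t0 = 0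
        rw [h0, neg_zero]
      have h' : ∃ f, G.i f = G.t h.choose ∧ P f t0 = 0 :=
        ⟨G.rev h.choose, G.i_rev h.choose, hrev0⟩
      have h2' : φ (G.t h.choose) = G.t h'.choose := dif_pos h'
      obtain ⟨hi2, h02⟩ := h'.choose_spec
      have hch : h'.choose = G.rev h.choose :=
        hu _ _ h02 hrev0 (by rw [hi2, G.i_rev])
      rw [h1, h2', hch, G.t_rev, hi]
    · have h1 : φ p = p := dif_neg h
      rw [h1, h1]
  have hbijφ : Function.Bijective φ := hinv.bijective
  unfold GKMGraph.betti
  have hset : {p : G.V | G.sigma p (ξ0 + tp • (ξ1 - ξ0)) = k}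
      = φ '' {p : G.V | G.sigma p (ξ0 + tm • (ξ1 - ξ0)) = k} := by
    ext q
    simp only [Set.mem_image, Set.mem_setOf_eq]
    constructor
    · intro hq
      exact ⟨φ q, by rw [hσφ (φ q), hinv q]; exact hq, hinv q⟩
    · rintro ⟨p, hp, rfl⟩
      rw [← hσφ p]; exact hp
  rw [hset, Set.ncard_image_of_injective _ hbijφ.injective]

end GKMaux
namespace GKMaux
variable {n : ℕ} (G : GKMGraph n)

lemma segment (h2 : G.TwoIndep) (nab : G.E → G.E → G.E)
    (hconn : G.IsConnection nab) (hcomp : G.Compatible nab)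
    (ξ0 ξ1 : Fin n → ℝ) (h0 : G.Generic ξ0) (h1 : G.Generic ξ1)
    (Hb : ∀ e f : G.E, LinearIndependent ℚ ![G.wQ e, G.wQ f] →
      G.pairing e ξ0 * G.pairing f ξ1 ≠ G.pairing f ξ0 * G.pairing e ξ1)
    (k : ℕ) : G.betti ξ0 k = G.betti ξ1 k := by
  classical
  set P : G.E → ℝ → ℝ := fun e t => G.pairing e (ξ0 + t • (ξ1 - ξ0)) with hPdef
  have hP : ∀ (e : G.E) (t : ℝ),
      P e t = G.pairing e ξ0 + t * (G.pairing e ξ1 - G.pairing e ξ0) :=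
    fun e t => pairing_seg G e ξ0 ξ1 t
  set S : Set ℝ := {t | ∃ e : G.E, P e t = 0} with hS
  have hSfin : S.Finite := by
    have hsub : S ⊆ ⋃ e : G.E, {t | P e t = 0} := by
      rintro t ⟨e, he⟩; exact Set.mem_iUnion.mpr ⟨e, he⟩
    refine Set.Finite.subset (Set.finite_iUnion fun e => ?_) hsub
    refine Set.Subsingleton.finite ?_
    intro a ha b hb
    simp only [Set.mem_setOf_eq] at ha hb
    rw [hP] at ha hb
    by_cases hB : G.pairing e ξ1 - G.pairing e ξ0 = 0
    · exfalso
      rw [hB, mul_zero, add_zero] at ha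
      exact h0 e ha
    · have : (a - b) * (G.pairing e ξ1 - G.pairing e ξ0) = 0 := by linarith
      rcases mul_eq_zero.mp this with h | h
      · linarith
      · exact absurd h hB
  have HbP : ∀ (t : ℝ) (e f : G.E), P e t = 0 → P f t = 0 →
      ¬ LinearIndependent ℚ ![G.wQ e, G.wQ f] := by
    intro t e f he hf hli
    rw [hP] at he hf
    apply Hb e f hli
    linear_combination (G.pairing f ξ1 - G.pairing f ξ0) * he -
      (G.pairing e ξ1 - G.pairing e ξ0) * hf
  have empty_case : ∀ t1 t2 : ℝ, t1 ≤ t2 → t1 ∉ S → t2 ∉ S → S ∩ Set.Ioo t1 t2 = ∅ →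
      G.betti (ξ0 + t1 • (ξ1 - ξ0)) k = G.betti (ξ0 + t2 • (ξ1 - ξ0)) k := by
    intro t1 t2 h12 ht1 ht2 hemp
    apply betti_eq_of_same_sign
    intro e
    have hnz : ∀ t ∈ Set.Icc t1 t2, P e t ≠ 0 := by
      intro t ht hz
      rcases eq_or_lt_of_le ht.1 with rfl | hlt1
      · exact ht1 ⟨e, hz⟩
      rcases eq_or_lt_of_le ht.2 with rfl | hlt2
      · exact ht2 ⟨e, hz⟩
      · exact Set.eq_empty_iff_forall_notMem.mp hemp t ⟨⟨e, hz⟩, hlt1, hlt2⟩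
    have := affine_sign (A := G.pairing e ξ0) (B := G.pairing e ξ1 - G.pairing e ξ0) h12
      (fun t ht => by rw [← hP]; exact hnz t ht)
    rw [← hP e t1, ← hP e t2] at this
    exact same_sign_of_mul_pos this
  have key : ∀ m : ℕ, ∀ t1 t2 : ℝ, t1 < t2 → t1 ∉ S → t2 ∉ S →
      (S ∩ Set.Ioo t1 t2).ncard ≤ m →
      G.betti (ξ0 + t1 • (ξ1 - ξ0)) k = G.betti (ξ0 + t2 • (ξ1 - ξ0)) k := by
    intro m
    induction m with
    | zero =>
      intro t1 t2 h12 ht1 ht2 hcard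
      have hemp : S ∩ Set.Ioo t1 t2 = ∅ :=
        (Set.ncard_eq_zero (hSfin.inter_of_left _)).mp (Nat.le_zero.mp hcard)
      exact empty_case t1 t2 h12.le ht1 ht2 hemp
    | succ m ih =>
      intro t1 t2 h12 ht1 ht2 hcard
      by_cases hemp : S ∩ Set.Ioo t1 t2 = ∅
      · exact empty_case t1 t2 h12.le ht1 ht2 hemp
      have hfin1 : (S ∩ Set.Ioo t1 t2).Finite := hSfin.inter_of_left _
      have hne : (S ∩ Set.Ioo t1 t2).Nonempty := Set.nonempty_iff_ne_empty.mpr hemp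
      have hTne : hfin1.toFinset.Nonempty := by rwa [Set.Finite.toFinset_nonempty]
      set t0 := hfin1.toFinset.min' hTne with ht0def
      have ht0mem : t0 ∈ S ∩ Set.Ioo t1 t2 := by
        have := hfin1.toFinset.min'_mem hTne
        rwa [Set.Finite.mem_toFinset] at this
      have ht0min : ∀ s ∈ S ∩ Set.Ioo t1 t2, t0 ≤ s := by
        intro s hs
        exact hfin1.toFinset.min'_le s ((Set.Finite.mem_toFinset _).mpr hs)
      have hfinU : (S ∩ Set.Ioo t0 t2).Finite := hSfin.inter_of_left _
      obtain ⟨u, hu1, hu2, hu3⟩ : ∃ u : ℝ, t0 < u ∧ u ≤ t2 ∧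
          ∀ s ∈ S, t0 < s → s < t2 → u ≤ s := by
        by_cases hU : (S ∩ Set.Ioo t0 t2).Nonempty
        · have hUne : hfinU.toFinset.Nonempty := by rwa [Set.Finite.toFinset_nonempty]
          refine ⟨hfinU.toFinset.min' hUne, ?_, ?_, ?_⟩
          · have := hfinU.toFinset.min'_mem hUne
            rw [Set.Finite.mem_toFinset] at this
            exact this.2.1
          · have := hfinU.toFinset.min'_mem hUne
            rw [Set.Finite.mem_toFinset] at this
            exact this.2.2.le
          · intro s hs hh1 hh2
            exact hfinU.toFinset.min'_le s ((Set.Finite.mem_toFinset _).mpr ⟨hs, hh1, hh2⟩)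
        · exact ⟨t2, ht0mem.2.2, le_refl _, fun s hs hh1 hh2 => (hU ⟨s, hs, hh1, hh2⟩).elim⟩
      set tp := (t0 + u) / 2 with htpdef
      have htp1 : t0 < tp := by rw [htpdef]; linarith
      have htp2 : tp < u := by rw [htpdef]; linarith
      have htpt2 : tp < t2 := lt_of_lt_of_le htp2 hu2
      have htpS : tp ∉ S := fun hmem =>
        absurd (hu3 tp hmem htp1 htpt2) (not_le.mpr htp2)
      have ht1t0 : ∀ s ∈ S, t1 < s → s < t0 → False := fun s hs hh1 hh2 =>
        absurd (ht0min s ⟨hs, hh1, lt_trans hh2 ht0mem.2.2⟩) (not_le.mpr hh2)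
      have hcross := crossing G h2 nab hconn hcomp ξ0 ξ1 t1 t0 tp ht0mem.2.1 htp1
        (by
          intro e t ht hnet0 hz
          have htS : t ∈ S := ⟨e, hz⟩
          rcases eq_or_lt_of_le ht.1 with rfl | hlt1
          · exact ht1 htS
          rcases lt_trichotomy t t0 with hc | hc | hc
          · exact ht1t0 t htS hlt1 hc
          · exact hnet0 hc
          · exact absurd (hu3 t htS hc (lt_of_le_of_lt ht.2 htpt2))
              (not_le.mpr (lt_of_le_of_lt ht.2 htp2)))
        (by
          intro e f he hf
          exact HbP t0 e f he hf) k
      have hsub : S ∩ Set.Ioo tp t2 ⊆ (S ∩ Set.Ioo t1 t2) \ {t0} := by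
        rintro s ⟨hs, hs1, hs2⟩
        refine ⟨⟨hs, lt_trans (lt_trans ht0mem.2.1 htp1) hs1, hs2⟩, ?_⟩
        intro hmem
        rw [Set.mem_singleton_iff] at hmem
        subst hmem
        exact absurd hs1 (not_lt.mpr htp1.le)
      have hlt : (S ∩ Set.Ioo tp t2).ncard ≤ m := by
        have hA := Set.ncard_le_ncard hsub hfin1.diff
        have hB := Set.ncard_diff_singleton_lt_of_mem ht0mem hfin1
        omega
      rw [hcross]
      exact ih tp t2 htpt2 htpS ht2 hlt
  have h0S : (0 : ℝ) ∉ S := by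
    rintro ⟨e, he⟩
    rw [hP] at he
    apply h0 e
    linarith
  have h1S : (1 : ℝ) ∉ S := by
    rintro ⟨e, he⟩
    rw [hP] at he
    apply h1 e
    linarith
  have := key (S ∩ Set.Ioo 0 1).ncard 0 1 one_pos h0S h1S le_rfl
  have e0 : ξ0 + (0 : ℝ) • (ξ1 - ξ0) = ξ0 := by simp
  have e1 : ξ0 + (1 : ℝ) • (ξ1 - ξ0) = ξ1 := by simp
  rwa [e0, e1] at this

end GKMaux

/-- invariance of the combinatorial Betti numbers.  If `Γ` is `d`-valent,
`α` is 2-independent, and `Γ` carries a connection compatible with `α`, then for any two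
generic vectors `ξ, ξ'` and every `k`, `β_k(Γ;ξ) = β_k(Γ;ξ')`. -/
theorem betti_independent_of_generic {n d : ℕ} (G : GKMGraph n)
    (hd : G.Valent d) (h2 : G.TwoIndep)
    (nab : G.E → G.E → G.E) (hconn : G.IsConnection nab) (hcomp : G.Compatible nab)
    (ξ ξ' : Fin n → ℝ) (hξ : G.Generic ξ) (hξ' : G.Generic ξ') (k : ℕ) :
    G.betti ξ k = G.betti ξ' k := by
  obtain ⟨ξ'', ha, hb⟩ := GKMaux.exists_good G ξ ξ' hξ hξ'
  have hgen'' : G.Generic ξ'' := fun e hz => by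
    have := ha e
    rw [hz, mul_zero] at this
    exact lt_irrefl 0 this
  have hA : G.betti ξ k = G.betti ξ'' k :=
    GKMaux.segment G h2 nab hconn hcomp ξ ξ'' hξ hgen'' hb k
  have hB : G.betti ξ' k = G.betti ξ'' k :=
    GKMaux.betti_eq_of_same_sign G ξ' ξ''
      (fun e => GKMaux.same_sign_of_mul_pos (ha e)) k
  rw [hA, hB]
end

section
/- Uniqueness of compatible connections: if the axial function α on Γ is 3-independent, then there is at most one connection on Γ compatible with α; i.e., if ∇ and ∇' are connections on Γ, both compatible with α, then ∇_e = ∇'_e for every oriented edge e. -/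
open MvPolynomial TensorProduct

/-- The axial function is 3-independent: for every vertex `p`, the weights of any
(at most three) distinct edges issuing from `p` are `ℚ`-linearly independent. -/
def GKMGraph.ThreeIndep {n : ℕ} (G : GKMGraph n) : Prop :=
  ∀ p : G.V, ∀ s : Finset G.E, (∀ e ∈ s, G.i e = p) → s.card ≤ 3 →
    LinearIndependent ℚ (fun e : s => G.wQ e)

/-! Both `∇_e e'` and `∇'_e e'` lie in `E_{t(e)}`, as does `ē`, and compatibility makes the
difference of their weights an integer multiple of `α_ē`. Three-independence at `t(e)` rules this
out unless the two edges coincide; when `ē` is one of them, the relation involves only two distinct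
edges, which is still excluded. -/

theorem LinearIndepOn.eq_of_sub_eq_smul {K V ι : Type*} [DivisionRing K] [AddCommGroup V]
    [Module K V] {v : ι → V} {x y z : ι} (hv : LinearIndepOn K v {x, y, z}) {c : K}
    (h : v x - v y = c • v z) : x = y := by
  wlog hxz : x ≠ z generalizing x y c
  · rcases eq_or_ne y z with rfl | hyz
    · exact not_not.1 hxz
    · exact (this (Set.insert_comm x y {z} ▸ hv) (by rw [neg_smul, ← h, neg_sub]) hyz).symm
  by_contra hxy
  refine hv.notMem_span_of_insert (by simp [hxy, hxz]) ?_
  rw [sub_eq_iff_eq_add] at h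
  rw [h, Set.image_insert_eq, Set.image_singleton]
  exact Submodule.add_mem _ (Submodule.smul_mem _ _ (Submodule.subset_span (by simp)))
    (Submodule.subset_span (by simp))

namespace GKMGraph

variable {n : ℕ} {G : GKMGraph n}

theorem ThreeIndep.linearIndepOn_triple (h3 : G.ThreeIndep) {p : G.V}
    {x y z : G.E} (hx : G.i x = p) (hy : G.i y = p) (hz : G.i z = p) :
    LinearIndepOn ℚ G.wQ {x, y, z} := by
  classical
  have h : LinearIndepOn ℚ G.wQ (({x, y, z} : Finset G.E) : Set G.E) :=
    h3 p {x, y, z} (by simp [hx, hy, hz])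
      ((Finset.card_insert_le _ _).trans (Nat.succ_le_succ Finset.card_le_two))
  simpa using h

theorem wQ_sub_wQ_of_w_sub_w {f g h : G.E} {k : ℤ} (hk : G.w f - G.w g = k • G.w h) :
    G.wQ f - G.wQ g = (k : ℚ) • G.wQ h := by
  funext j
  simpa [wQ] using congrArg (Int.cast : ℤ → ℚ) (congrFun hk j)

end GKMGraph

/-- uniqueness of compatible connections.  If `α` is 3-independent and
`∇`, `∇'` are connections on `Γ` both compatible with `α`, then `∇_e = ∇'_e` for
every oriented edge `e` (i.e. they agree on `E_{i(e)}`). -/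
theorem compatible_connection_unique {n : ℕ} (G : GKMGraph n)
    (h3 : G.ThreeIndep)
    (nab nab' : G.E → G.E → G.E)
    (hconn : G.IsConnection nab) (hcomp : G.Compatible nab)
    (hconn' : G.IsConnection nab') (hcomp' : G.Compatible nab') :
    ∀ e e' : G.E, G.i e' = G.i e → nab e e' = nab' e e' := by
  intro e e' he'
  obtain ⟨m, hm⟩ := hcomp e e' he'
  obtain ⟨m', hm'⟩ := hcomp' e e' he'
  have hrel : G.w (nab e e') - G.w (nab' e e') = (m' - m) • G.w (G.rev e) := by
    rw [hm, hm', G.w_rev]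
    module
  have hli : LinearIndepOn ℚ G.wQ {nab e e', nab' e e', G.rev e} :=
    h3.linearIndepOn_triple ((hconn.1 e).mapsTo he') ((hconn'.1 e).mapsTo he') (G.i_rev e)
  exact hli.eq_of_sub_eq_smul (GKMGraph.wQ_sub_wQ_of_w_sub_w hrel)
end
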